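/- Assume the conventions: X is an infinite, connected, locally finite, vertex-transitive simple graph satisfying (UBQ) with separation constant σ > 0. Then there exist a bi-infinite geodesic ρ : ℤ → V (i.e. d(ρ(s),ρ(t)) = |s−t| for all s,t ∈ ℤ, with consecutive vertices adjacent) and a one-way infinite geodesic ray γ : ℕ → V with γ(0) = ρ(0) and d(γ(t), ρ(ℤ)) = t for all t ∈ ℕ; moreover, for each of the two rays ρ₊(t) := ρ(t) and ρ₋(t) := ρ(−t) (t ∈ ℕ), the bi-infinite path obtained by concatenating γ⁻¹ with that ray (sending t ≤ 0 to γ(−t) and t ≥ 0 to the ray at time t) is a (4,0)-quasi-geodesic. -/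
import Mathlib


open SimpleGraph

/-- Closed `r`-neighbourhood of a set `A` in the graph metric of `X`. -/
def gnbhd {V : Type*} (X : SimpleGraph V) (A : Set V) (r : ℝ) : Set V :=
  {v : V | ∃ a ∈ A, (X.dist v a : ℝ) ≤ r}

/-- The induced subgraph on `Z` is connected. -/
def ConnSet {V : Type*} (X : SimpleGraph V) (Z : Set V) : Prop :=
  (X.induce Z).Connected

/-- `U` is a connected component of the subset `S` of the vertex set: `U` is a
nonempty connected subset of `S` which is maximal among connected subsets of `S`. -/
def IsCompOf {V : Type*} (X : SimpleGraph V) (U S : Set V) : Prop :=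
  U ⊆ S ∧ U.Nonempty ∧ ConnSet X U ∧
    ∀ U' : Set V, U ⊆ U' → U' ⊆ S → ConnSet X U' → U' = U

/-- A subset `Z` is narrow if it is quasi-isometric to a subset of `ℝ`
with respect to the ambient graph metric. -/
def Narrow {V : Type*} (X : SimpleGraph V) (Z : Set V) : Prop :=
  ∃ (lam c : ℝ) (f : Z → ℝ), 1 ≤ lam ∧ 0 ≤ c ∧
    ∀ x y : Z, |f x - f y| ≤ lam * (X.dist x.1 y.1 : ℝ) + c ∧
      (X.dist x.1 y.1 : ℝ) ≤ lam * |f x - f y| + c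

/-- A subset is wide if it is not narrow. -/
def Wide {V : Type*} (X : SimpleGraph V) (Z : Set V) : Prop := ¬ Narrow X Z

/-- `ρ : ℤ → V` is a bi-infinite `(lam, c)`-quasi-geodesic path. -/
def IsBiQG {V : Type*} (X : SimpleGraph V) (lam c : ℝ) (ρ : ℤ → V) : Prop :=
  (∀ n : ℤ, X.Adj (ρ n) (ρ (n + 1))) ∧
    ∀ s t : ℤ, |(s : ℝ) - (t : ℝ)| / lam - c ≤ (X.dist (ρ s) (ρ t) : ℝ)

/-- A bi-infinite quasi-geodesic: a bi-infinite path which is a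
`(lam, c)`-quasi-geodesic for some `lam ≥ 1`, `c ≥ 0`. -/
def IsBiQuasiGeodesic {V : Type*} (X : SimpleGraph V) (ρ : ℤ → V) : Prop :=
  ∃ lam c : ℝ, 1 ≤ lam ∧ 0 ≤ c ∧ IsBiQG X lam c ρ

/-- The subset `S` has exactly two wide connected components. -/
def TwoWideComps {V : Type*} (X : SimpleGraph V) (S : Set V) : Prop :=
  ∃ U₁ U₂ : Set V, U₁ ≠ U₂ ∧
    IsCompOf X U₁ S ∧ IsCompOf X U₂ S ∧ Wide X U₁ ∧ Wide X U₂ ∧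
    ∀ U : Set V, IsCompOf X U S → Wide X U → U = U₁ ∨ U = U₂

/-- The uniformly bisecting quasi-geodesics property with separation constant `σ`. -/
def UBQ {V : Type*} (X : SimpleGraph V) (σ : ℝ) : Prop :=
  ∀ ρ : ℤ → V, IsBiQuasiGeodesic X ρ →
    TwoWideComps X ((gnbhd X (Set.range ρ) σ)ᶜ)

/-- One-way infinite path. -/
def IsRay {V : Type*} (X : SimpleGraph V) (w : ℕ → V) : Prop :=
  ∀ n : ℕ, X.Adj (w n) (w (n + 1))

/-- `d(w t, A) → ∞` as `t → ∞`. -/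
def DivergesFrom {V : Type*} (X : SimpleGraph V) (w : ℕ → V) (A : Set V) : Prop :=
  ∀ M : ℝ, ∃ N : ℕ, ∀ t : ℕ, N ≤ t → ∀ a ∈ A, M < (X.dist (w t) a : ℝ)

/-- `(w₁, w₂)` is a pair of witnesses for the bi-infinite quasi-geodesic `ρ`:
they are one-way infinite simple paths lying in distinct wide components of the
complement of `N_σ(ρ(ℤ))`, both diverging from `ρ`. -/
def WitnessPair {V : Type*} (X : SimpleGraph V) (σ : ℝ) (ρ : ℤ → V)
    (w₁ w₂ : ℕ → V) : Prop :=
  IsRay X w₁ ∧ Function.Injective w₁ ∧ IsRay X w₂ ∧ Function.Injective w₂ ∧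
  (∃ U₁ U₂ : Set V, U₁ ≠ U₂ ∧
    IsCompOf X U₁ ((gnbhd X (Set.range ρ) σ)ᶜ) ∧ Wide X U₁ ∧
    IsCompOf X U₂ ((gnbhd X (Set.range ρ) σ)ᶜ) ∧ Wide X U₂ ∧
    Set.range w₁ ⊆ U₁ ∧ Set.range w₂ ⊆ U₂) ∧
  DivergesFrom X w₁ (Set.range ρ) ∧ DivergesFrom X w₂ (Set.range ρ)

/-- Concatenation of the reversal of the ray `a` with the ray `b`, as a
bi-infinite path (`t ↦ a (-t)` for `t ≤ 0` and `t ↦ b t` for `t ≥ 0`). -/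
def biconcat {V : Type*} (a b : ℕ → V) : ℤ → V :=
  fun t => if t < 0 then a (-t).toNat else b t.toNat

/-- One-way infinite `(lam, c)`-quasi-geodesic ray. -/
def IsQGRay {V : Type*} (X : SimpleGraph V) (lam c : ℝ) (γ : ℕ → V) : Prop :=
  IsRay X γ ∧
    ∀ s t : ℕ, |(s : ℝ) - (t : ℝ)| / lam - c ≤ (X.dist (γ s) (γ t) : ℝ)

/-- An `(R, r, lam, c)`-cross-examiner, with the three rays `γ i`, the three
witnesses `w i` and the three finite paths `q i` (of length `qn i`) indexed by
`ZMod 3` (where the paper's index `3` corresponds to `0 : ZMod 3`). -/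
def IsCrossExaminer {V : Type*} (X : SimpleGraph V) (σ R r lam c : ℝ) (v₀ : V)
    (γ w : ZMod 3 → ℕ → V) (q : ZMod 3 → ℕ → V) (qn : ZMod 3 → ℕ) : Prop :=
  1 ≤ lam ∧ 0 ≤ c ∧ 10 * σ < r ∧ r < R ∧
  (∀ i : ZMod 3, IsQGRay X lam c (γ i) ∧ γ i 0 = v₀ ∧ IsRay X (w i) ∧
    (∀ j : ℕ, j < qn i → X.Adj (q i j) (q i (j + 1)))) ∧
  ∀ i : ZMod 3,
    -- (CE1)
    IsBiQG X lam c (biconcat (γ (i + 1)) (γ (i + 2))) ∧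
    -- (CE2)
    (∃ U : Set V,
      IsCompOf X U (Set.range (biconcat (γ (i + 1)) (γ (i + 2))) \
        gnbhd X (q 0 '' Set.Iic (qn 0) ∪ q 1 '' Set.Iic (qn 1) ∪ q 2 '' Set.Iic (qn 2))
          (10 * σ)) ∧ w i 0 ∈ U ∧ v₀ ∈ U) ∧
    -- (CE3)
    WitnessPair X σ (biconcat (γ (i + 1)) (γ (i + 2))) (w i) (γ i) ∧
    -- (CE4)
    (∀ t : ℕ, r < (t : ℝ) → ∀ s : ℤ,
      10 * σ < (X.dist (w i t) (biconcat (γ (i + 1)) (γ (i + 2)) s) : ℝ)) ∧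
    -- (CE5)
    (q i 0 ∈ Set.range (γ (i + 1)) ∧ q i (qn i) ∈ Set.range (γ (i + 2)) ∧
      (q i '' Set.Iic (qn i)) ∩
        gnbhd X (Set.range (w (i + 1)) ∪ Set.range (w (i + 2)) ∪ Set.range (γ i))
          (10 * σ) = ∅) ∧
    -- (CE6)
    q i '' Set.Iic (qn i) ⊆ gnbhd X {v₀} (R - 10 * σ) \ gnbhd X {v₀} (r + 10 * σ)

/-- `X` has quadratic growth. -/
def QuadGrowth {V : Type*} (X : SimpleGraph V) : Prop :=
  ∃ C : ℝ, 0 < C ∧ ∀ v : V, ∀ n : ℕ, 1 ≤ n →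
    ({u : V | X.dist u v ≤ n}.ncard : ℝ) ≤ C * (n : ℝ) ^ 2

/-- The set of vertices at distance exactly `1` from `A`. -/
def vertexBoundary {V : Type*} (X : SimpleGraph V) (A : Set V) : Set V :=
  {v : V | v ∉ A ∧ ∃ a ∈ A, X.Adj v a}

/-- The depth of `A`: `inf {r ≥ 0 : A ⊆ N_r(∂A)}`. -/
noncomputable def gdepth {V : Type*} (X : SimpleGraph V) (A : Set V) : ℝ :=
  sInf {r : ℝ | 0 ≤ r ∧ A ⊆ gnbhd X (vertexBoundary X A) r}

/-- A `(lam, c)`-quasi-circle of length `n ≥ 1`: a closed path all of whose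
subpaths of length at most `n / 2` are `(lam, c)`-quasi-geodesics. -/
def IsQuasiCircle {V : Type*} (X : SimpleGraph V) (lam c : ℝ) (n : ℕ)
    (C : ZMod n → V) : Prop :=
  1 ≤ n ∧ (∀ k : ZMod n, X.Adj (C k) (C (k + 1))) ∧
    ∀ (k : ZMod n) (m s t : ℕ), 2 * m ≤ n → s ≤ m → t ≤ m →
      |(s : ℝ) - (t : ℝ)| / lam - c ≤
        (X.dist (C (k + (s : ZMod n))) (C (k + (t : ZMod n))) : ℝ)

/-- A truncated `(lam, c)`-quasi-circle with major face `F` (of length `nF`) and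
minor face `f` (of length `nf`): `F` is the initial part of a `(lam, c)`-quasi-circle
and `f` is a `(lam, c)`-quasi-geodesic with the same endpoints as the remaining part. -/
def IsTruncQuasiCircle {V : Type*} (X : SimpleGraph V) (lam c : ℝ)
    (F : ℕ → V) (nF : ℕ) (f : ℕ → V) (nf : ℕ) : Prop :=
  (∀ i : ℕ, i < nF → X.Adj (F i) (F (i + 1))) ∧
  (∀ i : ℕ, i < nf → X.Adj (f i) (f (i + 1))) ∧
  f 0 = F nF ∧ f nf = F 0 ∧
  (∀ s t : ℕ, s ≤ nf → t ≤ nf →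
    |(s : ℝ) - (t : ℝ)| / lam - c ≤ (X.dist (f s) (f t) : ℝ)) ∧
  ∃ (n : ℕ) (C : ZMod n → V), IsQuasiCircle X lam c n C ∧ nF ≤ n ∧
    ∀ i : ℕ, i ≤ nF → C (i : ZMod n) = F i

/-- The graph `X`, with its graph metric, is quasi-isometric to the metric space `Y`. -/
def QIto {V : Type*} (X : SimpleGraph V) (Y : Type*) [PseudoMetricSpace Y] : Prop :=
  ∃ (lam c : ℝ) (f : V → Y), 1 ≤ lam ∧ 0 ≤ c ∧
    (∀ x x' : V, (X.dist x x' : ℝ) / lam - c ≤ dist (f x) (f x') ∧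
      dist (f x) (f x') ≤ lam * (X.dist x x' : ℝ) + c) ∧
    ∀ y : Y, ∃ x : V, dist y (f x) ≤ c

/-- The Gromov product `(x · y)_w` in the graph metric. -/
noncomputable def gromovProd {V : Type*} (X : SimpleGraph V) (w x y : V) : ℝ :=
  ((X.dist x w : ℝ) + (X.dist y w : ℝ) - (X.dist x y : ℝ)) / 2

/-- `X` is Gromov hyperbolic. -/
def GromovHyperbolic {V : Type*} (X : SimpleGraph V) : Prop :=
  ∃ δ : ℝ, 0 ≤ δ ∧ ∀ w x y z : V,
    min (gromovProd X w x z) (gromovProd X w y z) - δ ≤ gromovProd X w x y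


section Aux

variable {V : Type*} {X : SimpleGraph V} {u v : V}

lemma dist_getVert_le (hconn : X.Connected) (p : X.Walk u v) (s t : ℕ) (hst : s ≤ t) :
    X.dist (p.getVert s) (p.getVert t) ≤ t - s := by
  induction t, hst using Nat.le_induction with
  | base => simp [SimpleGraph.dist_self]
  | succ t ht ih =>
    by_cases h : t < p.length
    · have hadj := p.adj_getVert_succ h
      have h1 : X.dist (p.getVert t) (p.getVert (t+1)) ≤ 1 :=
        le_of_eq (dist_eq_one_iff_adj.mpr hadj)
      calc X.dist (p.getVert s) (p.getVert (t+1))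
          ≤ X.dist (p.getVert s) (p.getVert t) + X.dist (p.getVert t) (p.getVert (t+1)) :=
            hconn.dist_triangle
        _ ≤ (t - s) + 1 := Nat.add_le_add ih h1
        _ ≤ (t + 1) - s := by omega
    · push_neg at h
      rw [p.getVert_of_length_le (h.trans (Nat.le_succ t))]
      calc X.dist (p.getVert s) v = X.dist (p.getVert s) (p.getVert t) := by
            rw [p.getVert_of_length_le h]
        _ ≤ t - s := ih
        _ ≤ t + 1 - s := by omega

lemma geodesic_getVert (hconn : X.Connected) (p : X.Walk u v) (hp : p.length = X.dist u v)
    {s t : ℕ} (hst : s ≤ t) (ht : t ≤ p.length) :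
    X.dist (p.getVert s) (p.getVert t) = t - s := by
  have hle := dist_getVert_le hconn p s t hst
  have h1 : X.dist u (p.getVert s) ≤ s := by
    simpa using dist_getVert_le hconn p 0 s (Nat.zero_le s)
  have h2 : X.dist (p.getVert t) v ≤ p.length - t := by
    simpa [p.getVert_length] using dist_getVert_le hconn p t p.length ht
  have h3 : X.dist u v ≤ X.dist u (p.getVert s) + X.dist (p.getVert s) (p.getVert t)
      + X.dist (p.getVert t) v :=
    le_trans hconn.dist_triangle (Nat.add_le_add_right hconn.dist_triangle _)
  omega

lemma iso_dist (hconn : X.Connected) (φ : X ≃g X) (u v : V) :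
    X.dist (φ u) (φ v) = X.dist u v := by
  have key : ∀ (ψ : X ≃g X) (a b : V), X.dist (ψ a) (ψ b) ≤ X.dist a b := by
    intro ψ a b
    obtain ⟨p, hp⟩ := hconn.exists_walk_length_eq_dist a b
    calc X.dist (ψ a) (ψ b) ≤ (p.map ψ.toHom).length := SimpleGraph.dist_le _
      _ = p.length := p.length_map _
      _ = X.dist a b := hp
  refine le_antisymm (key φ u v) ?_
  have := key φ.symm (φ u) (φ v)
  simpa using this

lemma ball_finite (hconn : X.Connected) (hlf : ∀ v : V, (X.neighborSet v).Finite)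
    (v₀ : V) : ∀ n : ℕ, {u : V | X.dist u v₀ ≤ n}.Finite := by
  intro n
  induction n with
  | zero =>
    apply Set.Finite.subset (Set.finite_singleton v₀)
    intro u hu
    simp only [Set.mem_setOf_eq, Nat.le_zero] at hu
    exact (hconn.dist_eq_zero_iff).mp hu
  | succ n ih =>
    apply Set.Finite.subset (ih.union ((ih.biUnion (fun w _ => hlf w))))
    intro u hu
    simp only [Set.mem_setOf_eq] at hu
    by_cases h0 : X.dist u v₀ = 0
    · exact Or.inl (by simp [Set.mem_setOf_eq, h0])
    · obtain ⟨p, hp⟩ := (hconn u v₀).exists_walk_length_eq_dist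
      have hlen : 1 ≤ p.length := by omega
      have hadj : X.Adj u (p.getVert 1) := by
        have := p.adj_getVert_succ (by omega : 0 < p.length)
        simpa [p.getVert_zero] using this
      have hd : X.dist (p.getVert 1) v₀ ≤ n := by
        have h2 : X.dist (p.getVert 1) (p.getVert p.length) = p.length - 1 :=
          geodesic_getVert hconn p hp hlen (le_refl _)
        rw [p.getVert_length] at h2
        omega
      exact Or.inr (Set.mem_biUnion (show p.getVert 1 ∈ {u : V | X.dist u v₀ ≤ n} from hd)
        hadj.symm)

lemma ulim_exists (𝓤 : Ultrafilter ℕ) {g : ℕ → V} {S : Set V} (hS : S.Finite)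
    (h : {m | g m ∈ S} ∈ 𝓤) : ∃ v : V, {m | g m = v} ∈ 𝓤 := by
  have he : {m | g m ∈ S} = ⋃ v ∈ S, {m | g m = v} := by ext m; simp
  rw [he, Ultrafilter.finite_biUnion_mem_iff hS] at h
  obtain ⟨v, _, hv⟩ := h
  exact ⟨v, hv⟩

lemma stage1_piece (hconn : X.Connected) (hinf : Infinite V)
    (hlf : ∀ v : V, (X.neighborSet v).Finite)
    (htrans : ∀ u v : V, ∃ φ : X ≃g X, φ u = v) (v₀ : V) (m : ℕ) :
    ∃ f : ℤ → V, f 0 = v₀ ∧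
      (∀ s t : ℤ, s.natAbs ≤ m → t.natAbs ≤ m → (X.dist (f s) (f t) : ℤ) = |s - t|) ∧
      (∀ k : ℤ, -(m:ℤ) ≤ k → k < m → X.Adj (f k) (f (k+1))) := by
  classical
  obtain ⟨u, hu⟩ := ((ball_finite hconn hlf v₀ (2*m)).infinite_compl).nonempty
  simp only [Set.mem_compl_iff, Set.mem_setOf_eq, not_le] at hu
  obtain ⟨p, hp⟩ := (hconn v₀ u).exists_walk_length_eq_dist
  have hL : 2*m < p.length := by rw [hp, SimpleGraph.dist_comm]; exact hu
  obtain ⟨φ, hφ⟩ := htrans (p.getVert m) v₀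
  refine ⟨fun k => φ (p.getVert ((m : ℤ) + k).toNat), by simpa using hφ, ?_, ?_⟩
  · have key : ∀ s t : ℤ, s ≤ t → s.natAbs ≤ m → t.natAbs ≤ m →
        (X.dist (φ (p.getVert ((m:ℤ)+s).toNat)) (φ (p.getVert ((m:ℤ)+t).toNat)) : ℤ)
          = |s - t| := by
      intro s t hst hs ht
      rw [iso_dist hconn φ]
      have h1 : ((m:ℤ)+s).toNat ≤ ((m:ℤ)+t).toNat := by omega
      have h2 : ((m:ℤ)+t).toNat ≤ p.length := by omega
      rw [geodesic_getVert hconn p hp h1 h2]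
      have : |s - t| = -(s - t) := abs_of_nonpos (by omega)
      omega
    intro s t hs ht
    rcases le_total s t with h | h
    · exact key s t h hs ht
    · rw [SimpleGraph.dist_comm, abs_sub_comm]
      exact key t s h ht hs
  · intro k hk1 hk2
    have h1 : ((m:ℤ)+k).toNat < p.length := by omega
    have hadj := p.adj_getVert_succ h1
    have h2 : ((m:ℤ)+(k+1)).toNat = ((m:ℤ)+k).toNat + 1 := by omega
    simp only []
    rw [h2]
    exact φ.map_rel_iff.mpr hadj

/-- Pick an element in the intersection of two ultrafilter sets. -/
lemma upick2 (𝓤 : Ultrafilter ℕ) {A B : Set ℕ} (hA : A ∈ 𝓤) (hB : B ∈ 𝓤) :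
    ∃ m, m ∈ A ∧ m ∈ B := by
  have := Filter.nonempty_of_mem (Filter.inter_mem hA hB : A ∩ B ∈ (𝓤 : Filter ℕ))
  exact this.imp fun m hm => hm

lemma upick3 (𝓤 : Ultrafilter ℕ) {A B C : Set ℕ} (hA : A ∈ 𝓤) (hB : B ∈ 𝓤) (hC : C ∈ 𝓤) :
    ∃ m, m ∈ A ∧ m ∈ B ∧ m ∈ C := by
  obtain ⟨m, hm, hm'⟩ := upick2 𝓤 (Filter.inter_mem hA hB : A ∩ B ∈ (𝓤 : Filter ℕ)) hC
  exact ⟨m, hm.1, hm.2, hm'⟩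

lemma upick4 (𝓤 : Ultrafilter ℕ) {A B C D : Set ℕ} (hA : A ∈ 𝓤) (hB : B ∈ 𝓤) (hC : C ∈ 𝓤)
    (hD : D ∈ 𝓤) : ∃ m, m ∈ A ∧ m ∈ B ∧ m ∈ C ∧ m ∈ D := by
  obtain ⟨m, hm, hm'⟩ := upick2 𝓤 (Filter.inter_mem hA (Filter.inter_mem hB hC)
    : A ∩ (B ∩ C) ∈ (𝓤 : Filter ℕ)) hD
  exact ⟨m, hm.1, hm.2.1, hm.2.2, hm'⟩

lemma cofin_mem (𝓤 : Ultrafilter ℕ) (h𝓤 : (𝓤 : Filter ℕ) ≤ Filter.cofinite) (c : ℕ) :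
    {m : ℕ | c ≤ m} ∈ 𝓤 := by
  apply h𝓤
  rw [Filter.mem_cofinite]
  have : {m : ℕ | c ≤ m}ᶜ = Set.Iio c := by ext m; simp [not_le]
  rw [this]; exact Set.finite_Iio c

lemma exists_biinf_geodesic (hconn : X.Connected) (hinf : Infinite V)
    (hlf : ∀ v : V, (X.neighborSet v).Finite)
    (htrans : ∀ u v : V, ∃ φ : X ≃g X, φ u = v) (v₀ : V) :
    ∃ ρ : ℤ → V, ρ 0 = v₀ ∧ (∀ k : ℤ, X.Adj (ρ k) (ρ (k+1))) ∧
      ∀ s t : ℤ, (X.dist (ρ s) (ρ t) : ℤ) = |s - t| := by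
  classical
  choose R hR0 hRd hRadj using fun m => stage1_piece hconn hinf hlf htrans v₀ m
  have : Filter.NeBot (Filter.cofinite : Filter ℕ) := Filter.cofinite_neBot
  set 𝓤 := Ultrafilter.of (Filter.cofinite : Filter ℕ) with h𝓤def
  have h𝓤 : (𝓤 : Filter ℕ) ≤ Filter.cofinite := Ultrafilter.of_le _
  have hball : ∀ k : ℤ, {m : ℕ | R m k ∈ {u : V | X.dist u v₀ ≤ k.natAbs}} ∈ 𝓤 := by
    intro k
    apply Filter.mem_of_superset (cofin_mem 𝓤 h𝓤 k.natAbs)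
    intro m hm
    have := hRd m k 0 (by simpa using hm) (by simp)
    rw [hR0 m, sub_zero, Int.abs_eq_natAbs] at this
    simp only [Set.mem_setOf_eq]
    omega
  have hlim : ∀ k : ℤ, ∃ x : V, {m | R m k = x} ∈ 𝓤 := fun k =>
    ulim_exists 𝓤 (ball_finite hconn hlf v₀ k.natAbs) (hball k)
  choose ρ hρ using hlim
  refine ⟨ρ, ?_, ?_, ?_⟩
  · obtain ⟨m, hm1, -⟩ := upick2 𝓤 (hρ 0) (hρ 0)
    rw [← hm1, hR0 m]
  · intro k
    obtain ⟨m, hm1, hm2, hm3⟩ := upick3 𝓤 (hρ k) (hρ (k+1)) (cofin_mem 𝓤 h𝓤 (k.natAbs + 1))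
    rw [← hm1, ← hm2]
    exact hRadj m k (by simp at hm3 ⊢; omega) (by simp at hm3 ⊢; omega)
  · intro s t
    obtain ⟨m, hm1, hm2, hm3⟩ := upick3 𝓤 (hρ s) (hρ t)
      (cofin_mem 𝓤 h𝓤 (max s.natAbs t.natAbs))
    rw [← hm1, ← hm2]
    exact hRd m s t (by simp at hm3 ⊢; omega) (by simp at hm3 ⊢; omega)

lemma stage2_piece (hconn : X.Connected)
    (htrans : ∀ u v : V, ∃ φ : X ≃g X, φ u = v) (v₀ : V) (ρ : ℤ → V)
    (hρadj : ∀ k : ℤ, X.Adj (ρ k) (ρ (k+1)))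
    (hρd : ∀ s t : ℤ, (X.dist (ρ s) (ρ t) : ℤ) = |s - t|)
    (hfar : ∀ M : ℕ, ∃ u : V, ∀ a : ℤ, M < X.dist u (ρ a)) (m : ℕ) :
    ∃ (g : ℤ → V) (p : ℕ → V),
      g 0 = v₀ ∧ p 0 = v₀ ∧
      (∀ k : ℤ, X.Adj (g k) (g (k+1))) ∧
      (∀ s t : ℤ, (X.dist (g s) (g t) : ℤ) = |s - t|) ∧
      (∀ t : ℕ, t < m → X.Adj (p t) (p (t+1))) ∧
      (∀ s t : ℕ, s ≤ t → t ≤ m → X.dist (p s) (p t) = t - s) ∧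
      (∀ t : ℕ, t ≤ m → ∀ a : ℤ, t ≤ X.dist (p t) (g a)) ∧
      (∀ t : ℕ, X.dist (p t) v₀ ≤ t) := by
  classical
  obtain ⟨u, hu⟩ := hfar m
  have hne : (Set.range fun a : ℤ => X.dist u (ρ a)).Nonempty := ⟨_, ⟨0, rfl⟩⟩
  set n := sInf (Set.range fun a : ℤ => X.dist u (ρ a)) with hn
  obtain ⟨a₀, ha₀⟩ := Nat.sInf_mem hne
  have hmin : ∀ a : ℤ, n ≤ X.dist u (ρ a) := fun a => Nat.sInf_le ⟨a, rfl⟩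
  have hmn : m < n := by have h := hu a₀; simp only [] at ha₀; omega
  obtain ⟨q, hq⟩ := (hconn (ρ a₀) u).exists_walk_length_eq_dist
  have hqn : q.length = n := by rw [hq, SimpleGraph.dist_comm]; exact ha₀
  obtain ⟨φ, hφ⟩ := htrans (ρ a₀) v₀
  refine ⟨fun k => φ (ρ (a₀ + k)), fun t => φ (q.getVert t),
    by simpa using hφ, by simp only []; rw [q.getVert_zero]; exact hφ, ?_, ?_, ?_, ?_, ?_, ?_⟩
  · intro k
    simp only []
    have : a₀ + (k + 1) = (a₀ + k) + 1 := by ring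
    rw [this]
    exact φ.map_rel_iff.mpr (hρadj (a₀ + k))
  · intro s t
    rw [iso_dist hconn φ, hρd]
    congr 1
    ring
  · intro t ht
    simp only []
    exact φ.map_rel_iff.mpr (q.adj_getVert_succ (by omega))
  · intro s t hst ht
    rw [iso_dist hconn φ]
    exact geodesic_getVert hconn q hq hst (by omega)
  · intro t ht a
    rw [iso_dist hconn φ]
    have h1 : X.dist (q.getVert t) u = n - t := by
      have := geodesic_getVert hconn q hq (show t ≤ q.length by omega) le_rfl
      rwa [q.getVert_length, hqn] at this
    have h2 := hmin (a₀ + a)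
    have h3 : X.dist u (ρ (a₀ + a)) ≤ X.dist u (q.getVert t) + X.dist (q.getVert t) (ρ (a₀ + a)) :=
      hconn.dist_triangle
    rw [SimpleGraph.dist_comm (u := u) (v := q.getVert t), h1] at h3
    omega
  · intro t
    rw [← hφ, iso_dist hconn φ, SimpleGraph.dist_comm]
    have := dist_getVert_le hconn q 0 t (Nat.zero_le t)
    rwa [q.getVert_zero, Nat.sub_zero] at this

end Aux
section Extra
variable {V : Type*} {X : SimpleGraph V}

lemma exists_far_point (hconn : X.Connected) (σ : ℝ) (hubq : UBQ X σ) (ρ : ℤ → V)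
    (hρadj : ∀ k : ℤ, X.Adj (ρ k) (ρ (k+1)))
    (hρd : ∀ s t : ℤ, (X.dist (ρ s) (ρ t) : ℤ) = |s - t|) :
    ∀ M : ℕ, ∃ u : V, ∀ a : ℤ, M < X.dist u (ρ a) := by
  classical
  have hqg : IsBiQuasiGeodesic X ρ := by
    refine ⟨1, 0, le_rfl, le_rfl, hρadj, ?_⟩
    intro s t
    have h := congrArg (Int.cast : ℤ → ℝ) (hρd s t)
    push_cast at h
    rw [div_one, sub_zero, ← h]
  obtain ⟨U₁, U₂, hne, hc1, hc2, hw1, hw2, huniq⟩ := hubq ρ hqg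
  intro M
  by_contra hcon
  push_neg at hcon
  apply hw1
  choose g hg using fun x : U₁ => hcon x.1
  refine ⟨1, 2 * M + 1, fun x => ((g x : ℤ) : ℝ), le_rfl, by positivity, ?_⟩
  intro x y
  have e : (X.dist (ρ (g x)) (ρ (g y)) : ℝ) = |((g x : ℤ) : ℝ) - ((g y : ℤ) : ℝ)| := by
    have h := congrArg (Int.cast : ℤ → ℝ) (hρd (g x) (g y))
    push_cast at h ⊢
    rw [h]
  have t1 : X.dist (ρ (g x)) (ρ (g y)) ≤
      X.dist (ρ (g x)) x.1 + X.dist x.1 y.1 + X.dist y.1 (ρ (g y)) :=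
    le_trans hconn.dist_triangle (Nat.add_le_add_right hconn.dist_triangle _)
  have t2 : X.dist x.1 y.1 ≤
      X.dist x.1 (ρ (g x)) + X.dist (ρ (g x)) (ρ (g y)) + X.dist (ρ (g y)) y.1 :=
    le_trans hconn.dist_triangle (Nat.add_le_add_right hconn.dist_triangle _)
  have hgx := hg x
  have hgy := hg y
  rw [SimpleGraph.dist_comm (u := ρ (g x)) (v := x.1)] at t1
  rw [SimpleGraph.dist_comm (u := ρ (g y)) (v := y.1)] at t2
  have c1 := (Nat.cast_le (α := ℝ)).mpr t1
  have c2 := (Nat.cast_le (α := ℝ)).mpr t2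
  have cgx := (Nat.cast_le (α := ℝ)).mpr hgx
  have cgy := (Nat.cast_le (α := ℝ)).mpr hgy
  push_cast at c1 c2 cgx cgy
  constructor
  · simp only []
    rw [← e]; linarith
  · simp only []
    linarith

lemma isBiQG_concat (hconn : X.Connected) (γ r : ℕ → V)
    (hγadj : ∀ t : ℕ, X.Adj (γ t) (γ (t+1)))
    (hradj : ∀ t : ℕ, X.Adj (r t) (r (t+1)))
    (h0 : γ 0 = r 0)
    (hγd : ∀ s t : ℕ, (X.dist (γ s) (γ t) : ℤ) = |(s:ℤ) - (t:ℤ)|)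
    (hrd : ∀ s t : ℕ, (X.dist (r s) (r t) : ℤ) = |(s:ℤ) - (t:ℤ)|)
    (hlow : ∀ t s : ℕ, t ≤ X.dist (γ t) (r s)) :
    IsBiQG X 4 0 (biconcat γ r) := by
  have key : ∀ s t : ℤ, s < 0 → 0 ≤ t →
      |(s : ℝ) - (t : ℝ)| / 4 - 0 ≤ (X.dist (γ (-s).toNat) (r t.toNat) : ℝ) := by
    intro s t hs ht
    set u := (-s).toNat with hu
    set t' := t.toNat with ht'
    set d := X.dist (γ u) (r t') with hd
    have f1 : (u : ℤ) ≤ (d : ℤ) := by exact_mod_cast hlow u t'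
    have f2 : (X.dist (r 0) (r t') : ℤ) = (t' : ℤ) := by
      have := hrd 0 t'; simpa using this
    have f3 : (X.dist (γ u) (r 0) : ℤ) = (u : ℤ) := by
      rw [← h0]
      have := hγd u 0; simpa using this
    have f4 : X.dist (r 0) (r t') ≤ X.dist (r 0) (γ u) + X.dist (γ u) (r t') :=
      hconn.dist_triangle
    rw [SimpleGraph.dist_comm (u := r 0) (v := γ u)] at f4
    have f4' : (X.dist (r 0) (r t') : ℤ) ≤ (X.dist (γ u) (r 0) : ℤ) + (d : ℤ) := by
      exact_mod_cast f4
    have f5 : (t' : ℤ) ≤ (u : ℤ) + (d : ℤ) := by rw [f2, f3] at f4'; omega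
    have habs : |s - t| = -(s - t) := abs_of_nonpos (by omega)
    have hkey : |s - t| ≤ 4 * (d : ℤ) := by
      have hu' : (u : ℤ) = -s := by omega
      have ht'' : (t' : ℤ) = t := by omega
      omega
    have := (Int.cast_le (R := ℝ)).mpr hkey
    push_cast at this
    linarith
  constructor
  · intro n
    rcases lt_trichotomy n (-1) with h | h | h
    · have h1 : n < 0 := by omega
      have h2 : n + 1 < 0 := by omega
      simp only [biconcat, if_pos h1, if_pos h2]
      have he : (-n).toNat = (-(n+1)).toNat + 1 := by omega
      rw [he]
      exact (hγadj _).symm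
    · subst h
      simp only [biconcat]
      norm_num
      have : γ (1 : ℕ) = γ ((-(-1 : ℤ)).toNat) := by norm_num
      exact h0 ▸ (hγadj 0).symm
    · have h1 : ¬ n < 0 := by omega
      have h2 : ¬ n + 1 < 0 := by omega
      simp only [biconcat, if_neg h1, if_neg h2]
      have he : (n+1).toNat = n.toNat + 1 := by omega
      rw [he]
      exact hradj n.toNat
  · intro s t
    rcases lt_or_ge s 0 with hs | hs <;> rcases lt_or_ge t 0 with ht | ht
    · simp only [biconcat, if_pos hs, if_pos ht]
      have h := congrArg (Int.cast : ℤ → ℝ) (hγd (-s).toNat (-t).toNat)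
      have e1 : (((-s).toNat : ℤ)) = -s := by omega
      have e2 : (((-t).toNat : ℤ)) = -t := by omega
      rw [e1, e2] at h
      push_cast at h
      rw [h]
      have h3 : |-(s:ℝ) - -(t:ℝ)| = |(s:ℝ) - (t:ℝ)| := by
        rw [← abs_neg]; ring_nf
      rw [h3]
      have := abs_nonneg ((s:ℝ) - (t:ℝ))
      linarith
    · simp only [biconcat, if_pos hs, if_neg (not_lt.mpr ht)]
      exact key s t hs ht
    · simp only [biconcat, if_neg (not_lt.mpr hs), if_pos ht]
      rw [SimpleGraph.dist_comm, abs_sub_comm]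
      exact key t s ht hs
    · simp only [biconcat, if_neg (not_lt.mpr hs), if_neg (not_lt.mpr ht)]
      have h := congrArg (Int.cast : ℤ → ℝ) (hrd s.toNat t.toNat)
      have e1 : ((s.toNat : ℤ)) = s := by omega
      have e2 : ((t.toNat : ℤ)) = t := by omega
      rw [e1, e2] at h
      push_cast at h
      rw [h]
      have := abs_nonneg ((s:ℝ) - (t:ℝ))
      linarith
end Extra

theorem statement_19 {V : Type*} (X : SimpleGraph V)
    (hinf : Infinite V) (hconn : X.Connected)
    (hlf : ∀ v : V, (X.neighborSet v).Finite)
    (htrans : ∀ u v : V, ∃ φ : X ≃g X, φ u = v)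
    (σ : ℝ) (hσ : 0 < σ) (hubq : UBQ X σ) :
    ∃ (ρ : ℤ → V) (γ : ℕ → V),
      (∀ n : ℤ, X.Adj (ρ n) (ρ (n + 1))) ∧
      (∀ s t : ℤ, (X.dist (ρ s) (ρ t) : ℤ) = |s - t|) ∧
      IsRay X γ ∧ γ 0 = ρ 0 ∧
      (∀ s t : ℕ, (X.dist (γ s) (γ t) : ℤ) = |(s : ℤ) - (t : ℤ)|) ∧
      (∀ t : ℕ, (∀ a : ℤ, t ≤ X.dist (γ t) (ρ a)) ∧
        ∃ a : ℤ, X.dist (γ t) (ρ a) = t) ∧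
      IsBiQG X 4 0 (biconcat γ (fun n : ℕ => ρ (n : ℤ))) ∧
      IsBiQG X 4 0 (biconcat γ (fun n : ℕ => ρ (-(n : ℤ)))) := by
  classical
  obtain ⟨v₀⟩ : Nonempty V := inferInstance
  obtain ⟨ρ₁, hρ₁0, hρ₁adj, hρ₁d⟩ := exists_biinf_geodesic hconn hinf hlf htrans v₀
  have hfar := exists_far_point hconn σ hubq ρ₁ hρ₁adj hρ₁d
  choose G P hG0 hP0 hGadj hGd hPadj hPd hPlow hPle using
    stage2_piece hconn htrans v₀ ρ₁ hρ₁adj hρ₁d hfar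
  have hnb : Filter.NeBot (Filter.cofinite : Filter ℕ) := Filter.cofinite_neBot
  set 𝓤 := Ultrafilter.of (Filter.cofinite : Filter ℕ) with h𝓤def
  have h𝓤 : (𝓤 : Filter ℕ) ≤ Filter.cofinite := Ultrafilter.of_le _
  have hGball : ∀ k : ℤ, {m : ℕ | G m k ∈ {u : V | X.dist u v₀ ≤ k.natAbs}} ∈ 𝓤 := by
    intro k
    apply Filter.univ_mem'
    intro m
    have h := hGd m k 0
    rw [hG0 m, sub_zero, Int.abs_eq_natAbs] at h
    simp only [Set.mem_setOf_eq]
    omega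
  have hPball : ∀ t : ℕ, {m : ℕ | P m t ∈ {u : V | X.dist u v₀ ≤ t}} ∈ 𝓤 := by
    intro t
    apply Filter.univ_mem'
    intro m
    exact hPle m t
  choose ρ hρ using fun k : ℤ =>
    ulim_exists 𝓤 (ball_finite hconn hlf v₀ k.natAbs) (hGball k)
  choose γ hγ using fun t : ℕ =>
    ulim_exists 𝓤 (ball_finite hconn hlf v₀ t) (hPball t)
  have hρ0 : ρ 0 = v₀ := by
    obtain ⟨m, hm, -⟩ := upick2 𝓤 (hρ 0) (hρ 0)
    rw [← hm, hG0 m]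
  have hγ0 : γ 0 = v₀ := by
    obtain ⟨m, hm, -⟩ := upick2 𝓤 (hγ 0) (hγ 0)
    rw [← hm, hP0 m]
  have hρadj : ∀ k : ℤ, X.Adj (ρ k) (ρ (k+1)) := by
    intro k
    obtain ⟨m, hm1, hm2⟩ := upick2 𝓤 (hρ k) (hρ (k+1))
    rw [← hm1, ← hm2]
    exact hGadj m k
  have hρd : ∀ s t : ℤ, (X.dist (ρ s) (ρ t) : ℤ) = |s - t| := by
    intro s t
    obtain ⟨m, hm1, hm2⟩ := upick2 𝓤 (hρ s) (hρ t)
    rw [← hm1, ← hm2]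
    exact hGd m s t
  have hγadj : ∀ t : ℕ, X.Adj (γ t) (γ (t+1)) := by
    intro t
    obtain ⟨m, hm1, hm2, hm3⟩ := upick3 𝓤 (hγ t) (hγ (t+1)) (cofin_mem 𝓤 h𝓤 (t+1))
    rw [← hm1, ← hm2]
    exact hPadj m t hm3
  have hγd : ∀ s t : ℕ, (X.dist (γ s) (γ t) : ℤ) = |(s : ℤ) - (t : ℤ)| := by
    have key : ∀ s t : ℕ, s ≤ t → (X.dist (γ s) (γ t) : ℤ) = |(s : ℤ) - (t : ℤ)| := by
      intro s t hst
      obtain ⟨m, hm1, hm2, hm3⟩ := upick3 𝓤 (hγ s) (hγ t) (cofin_mem 𝓤 h𝓤 t)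
      rw [← hm1, ← hm2, hPd m s t hst hm3]
      have : |(s : ℤ) - (t : ℤ)| = -((s : ℤ) - (t : ℤ)) := abs_of_nonpos (by omega)
      omega
    intro s t
    rcases le_total s t with h | h
    · exact key s t h
    · rw [SimpleGraph.dist_comm, abs_sub_comm]
      exact key t s h
  have hlow : ∀ t : ℕ, ∀ a : ℤ, t ≤ X.dist (γ t) (ρ a) := by
    intro t a
    obtain ⟨m, hm1, hm2, hm3⟩ := upick3 𝓤 (hγ t) (hρ a) (cofin_mem 𝓤 h𝓤 t)
    rw [← hm1, ← hm2]
    exact hPlow m t hm3 a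
  have heq0 : ∀ t : ℕ, X.dist (γ t) (ρ 0) = t := by
    intro t
    refine le_antisymm ?_ (hlow t 0)
    obtain ⟨m, hm1, -⟩ := upick2 𝓤 (hγ t) (hγ t)
    rw [hρ0, ← hm1]
    exact hPle m t
  refine ⟨ρ, γ, hρadj, hρd, hγadj, by rw [hγ0, hρ0], hγd,
    fun t => ⟨hlow t, 0, heq0 t⟩, ?_, ?_⟩
  · apply isBiQG_concat hconn γ _ hγadj _ (by norm_num [hγ0, hρ0]) hγd _ _
    · intro t
      have := hρadj (t : ℤ)
      simpa using this
    · intro s t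
      have := hρd (s : ℤ) (t : ℤ)
      simpa using this
    · intro t s
      exact hlow t (s : ℤ)
  · apply isBiQG_concat hconn γ _ hγadj _ (by norm_num [hγ0, hρ0]) hγd _ _
    · intro t
      have h := hρadj (-(t : ℤ) - 1)
      have e : (-(t : ℤ) - 1) + 1 = -(t : ℤ) := by ring
      rw [e] at h
      have e2 : -((t : ℤ) + 1) = -(t : ℤ) - 1 := by ring
      rw [show ((t + 1 : ℕ) : ℤ) = (t : ℤ) + 1 by push_cast; ring, e2]
      exact h.symm
    · intro s t
      have := hρd (-(s : ℤ)) (-(t : ℤ))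
      rw [show -(s : ℤ) - -(t : ℤ) = -((s:ℤ) - (t:ℤ)) by ring, abs_neg] at this
      exact this
    · intro t s
      exact hlow t (-(s : ℤ))
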